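/- arXiv:1711.06963 — 2 statements merged into one kernel-verified Lean document; each statement's English description precedes it below -/
import Mathlib

section
/- Let P = {x ∈ ℝⁿ_+ : Ax ≤ b} be a packing polyhedron with rational data and m ≥ 2 constraints, i.e., A_{ij} ≥ 0, b_i ≥ 0 and A_{ij} ≤ b_i for all i ∈ [m], j ∈ [n]. Then 2-𝒜(P) ⊆ 3·𝒜₂(P): the original 2-row closure of a packing polyhedron is contained in 3 times its 2-aggregation closure. -/
open scoped Pointwise

/-- `P^I(λ)` for a packing system `Ax ≤ b, x ≥ 0`: the convex hull of the nonnegative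
integer points satisfying the aggregated constraint `λᵀAx ≤ λᵀb`. -/
noncomputable def packAggIntHull {m n : ℕ} (A : Matrix (Fin m) (Fin n) ℚ) (b : Fin m → ℚ)
    (lam : Fin m → ℝ) : Set (Fin n → ℝ) :=
  convexHull ℝ {x | (∀ j, 0 ≤ x j) ∧ (∀ j, ∃ z : ℤ, x j = (z : ℝ)) ∧
    ∑ i, lam i * ∑ j, (A i j : ℝ) * x j ≤ ∑ i, lam i * (b i : ℝ)}

/-- `P^I(λ₁,λ₂)` for a packing system. -/
noncomputable def packAggIntHull2 {m n : ℕ} (A : Matrix (Fin m) (Fin n) ℚ) (b : Fin m → ℚ)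
    (l1 l2 : Fin m → ℝ) : Set (Fin n → ℝ) :=
  convexHull ℝ {x | (∀ j, 0 ≤ x j) ∧ (∀ j, ∃ z : ℤ, x j = (z : ℝ)) ∧
    (∑ i, l1 i * ∑ j, (A i j : ℝ) * x j ≤ ∑ i, l1 i * (b i : ℝ)) ∧
    (∑ i, l2 i * ∑ j, (A i j : ℝ) * x j ≤ ∑ i, l2 i * (b i : ℝ))}

/-- The aggregation closure `𝒜(P) = ∩_{λ ≥ 0} P^I(λ)` of a packing polyhedron. -/
noncomputable def packAggClosure {m n : ℕ} (A : Matrix (Fin m) (Fin n) ℚ) (b : Fin m → ℚ) :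
    Set (Fin n → ℝ) :=
  ⋂ lam ∈ {l : Fin m → ℝ | ∀ i, 0 ≤ l i}, packAggIntHull A b lam

/-- The 2-aggregation closure `𝒜₂(P) = ∩_{λ₁,λ₂ ≥ 0} P^I(λ₁,λ₂)` of a packing polyhedron. -/
noncomputable def packAgg2Closure {m n : ℕ} (A : Matrix (Fin m) (Fin n) ℚ) (b : Fin m → ℚ) :
    Set (Fin n → ℝ) :=
  ⋂ l1 ∈ {l : Fin m → ℝ | ∀ i, 0 ≤ l i}, ⋂ l2 ∈ {l : Fin m → ℝ | ∀ i, 0 ≤ l i},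
    packAggIntHull2 A b l1 l2

/-- The original 2-row closure `2-𝒜(P) = ∩_{{i₁,i₂}⊆[m], i₁≠i₂} P^I(e_{i₁},e_{i₂})`
of a packing polyhedron. -/
noncomputable def packRow2Closure {m n : ℕ} (A : Matrix (Fin m) (Fin n) ℚ) (b : Fin m → ℚ) :
    Set (Fin n → ℝ) :=
  ⋂ i1 : Fin m, ⋂ i2 : Fin m, ⋂ _ : i1 ≠ i2,
    packAggIntHull2 A b (Pi.single i1 1) (Pi.single i2 1)


/-!
A point `x` of the 2-row closure lies in `P`, since every row of `A` belongs to some pair of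
distinct rows. For `λ₁, λ₂ ≥ 0` the aggregated rows `λ₁ᵀA ≤ λ₁ᵀb`, `λ₂ᵀA ≤ λ₂ᵀb` again form a
packing system satisfied by `x`, so it suffices that `x / (k + 1)` lies in the integer hull of any
`k`-row packing system `Cx ≤ d` satisfied by `x ≥ 0`. This goes by induction on the support of `x`.
If it has at most `k` elements, `x / (k + 1)` is an average of `⌊x⌋`, the points `fract(x_j) e_j`
(on the segments `[0, e_j]`) and `0`. A support coordinate whose column of `C` vanishes is a
recession direction of the integer hull and can be split off. Otherwise `k + 1` support columns of
`C` are linearly dependent; since `C ≥ 0` and no such column vanishes, the dependency has entries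
of both signs, and moving along it both ways writes `x` as a convex combination of two feasible
points of smaller support.
-/

open Finset Matrix

theorem Convex.inv_natCast_add_one_smul_add_sum_mem {E α : Type*} [AddCommGroup E] [Module ℝ E]
    {S : Set E} (hS : Convex ℝ S) (h0 : 0 ∈ S) {p : E} (hp : p ∈ S) {s : Finset α} {u : α → E}
    (hu : ∀ j ∈ s, u j ∈ S) {N : ℕ} (hN : #s ≤ N) :
    ((N : ℝ) + 1)⁻¹ • (p + ∑ j ∈ s, u j) ∈ S := by
  classical
  have hsum : p + ∑ j ∈ s, u j ∈ ((#s : ℝ) + 1) • S := by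
    induction s using Finset.induction_on with
    | empty => simpa using hp
    | insert a s ha ih =>
      rw [sum_insert ha, add_left_comm, card_insert_of_notMem ha, Nat.cast_succ, add_right_comm,
        add_comm _ (1 : ℝ), hS.add_smul zero_le_one (by positivity), one_smul]
      exact Set.add_mem_add (hu a (mem_insert_self a s))
        (ih (fun j hj => hu j (mem_insert_of_mem hj)) ((card_le_card (subset_insert a s)).trans hN))
  obtain ⟨z, hz, hz_eq⟩ := Set.mem_smul_set.mp hsum
  rw [← hz_eq, smul_smul]
  refine hS.smul_mem_of_zero_mem h0 hz ⟨by positivity, ?_⟩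
  rw [inv_mul_le_one₀ (by positivity)]
  exact_mod_cast Nat.succ_le_succ hN

section Knapsack

variable {ι κ : Type*} [Fintype ι]

def knapsackIntPoints (C : Matrix κ ι ℝ) (d : κ → ℝ) : Set (ι → ℝ) :=
  {z | 0 ≤ z ∧ (∀ j, ∃ k : ℤ, z j = k) ∧ C *ᵥ z ≤ d}

variable {C : Matrix κ ι ℝ} {d : κ → ℝ}

theorem Matrix.mulVec_le_mulVec_of_nonneg (hC : ∀ i j, 0 ≤ C i j) {x y : ι → ℝ} (hxy : x ≤ y) :
    C *ᵥ x ≤ C *ᵥ y :=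
  fun i => dotProduct_le_dotProduct_of_nonneg_left hxy (hC i)

theorem convexHull_knapsackIntPoints_subset :
    convexHull ℝ (knapsackIntPoints C d) ⊆ {y | 0 ≤ y ∧ C *ᵥ y ≤ d} :=
  convexHull_min (fun _ hz => ⟨hz.1, hz.2.2⟩)
    ((convex_Ici 0).inter ((convex_Iic d).linear_preimage C.mulVecLin))

theorem zero_mem_knapsackIntPoints (hd : 0 ≤ d) : 0 ∈ knapsackIntPoints C d :=
  ⟨le_rfl, fun _ => ⟨0, by simp⟩, by simpa using hd⟩

theorem single_one_mem_knapsackIntPoints [DecidableEq ι] (hCd : ∀ i j, C i j ≤ d i) (j : ι) :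
    Pi.single j 1 ∈ knapsackIntPoints C d := by
  refine ⟨Pi.single_nonneg.mpr zero_le_one, fun j' => ?_, ?_⟩
  · rcases eq_or_ne j' j with rfl | h
    · exact ⟨1, by simp⟩
    · exact ⟨0, by simp [h]⟩
  · rw [mulVec_single_one]
    exact fun i => hCd i j

theorem floor_mem_knapsackIntPoints (hC : ∀ i j, 0 ≤ C i j) {x : ι → ℝ} (hx : 0 ≤ x)
    (hCx : C *ᵥ x ≤ d) :
    (fun j => (⌊x j⌋ : ℝ)) ∈ knapsackIntPoints C d :=
  ⟨fun j => by simpa using Int.floor_nonneg.mpr (hx j), fun j => ⟨_, rfl⟩,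
    (mulVec_le_mulVec_of_nonneg hC fun j => Int.floor_le (x j)).trans hCx⟩

theorem add_natCast_smul_single_one_mem_knapsackIntPoints [DecidableEq ι] {j : ι}
    (hCj : ∀ i, C i j = 0) {z : ι → ℝ} (hz : z ∈ knapsackIntPoints C d) (N : ℕ) :
    z + (N : ℝ) • Pi.single j 1 ∈ knapsackIntPoints C d := by
  obtain ⟨hz0, hzint, hCz⟩ := hz
  refine ⟨add_nonneg hz0 (smul_nonneg N.cast_nonneg (Pi.single_nonneg.mpr zero_le_one)),
    fun j' => ?_, ?_⟩
  · obtain ⟨k, hk⟩ := hzint j'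
    rcases eq_or_ne j' j with rfl | h
    · exact ⟨k + N, by simp [hk]⟩
    · exact ⟨k, by simp [hk, h]⟩
  · have hcol : C.col j = 0 := funext hCj
    rwa [mulVec_add, mulVec_smul, mulVec_single_one, hcol, smul_zero, add_zero]

theorem add_smul_single_one_mem_convexHull_knapsackIntPoints [DecidableEq ι] {j : ι}
    (hCj : ∀ i, C i j = 0) {z : ι → ℝ} (hz : z ∈ convexHull ℝ (knapsackIntPoints C d))
    {t : ℝ} (ht : 0 ≤ t) : z + t • Pi.single j 1 ∈ convexHull ℝ (knapsackIntPoints C d) := by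
  rcases ht.eq_or_lt with rfl | ht
  · simpa using hz
  set N := ⌈t⌉₊
  have hN : (0 : ℝ) < N := by exact_mod_cast Nat.ceil_pos.mpr ht
  have hzN : z + (N : ℝ) • Pi.single j 1 ∈ convexHull ℝ (knapsackIntPoints C d) := by
    have hvadd : (N : ℝ) • Pi.single j 1 +ᵥ knapsackIntPoints C d ⊆ knapsackIntPoints C d := by
      rintro _ ⟨y, hy, rfl⟩
      simp only [vadd_eq_add, add_comm _ y]
      exact add_natCast_smul_single_one_mem_knapsackIntPoints hCj hy N
    refine convexHull_mono hvadd ?_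
    rw [convexHull_vadd, add_comm]
    exact Set.vadd_mem_vadd_set hz
  have h := (convex_convexHull ℝ _).add_smul_mem hz hzN
    ⟨div_nonneg ht.le hN.le, div_le_one_of_le₀ (Nat.le_ceil t) hN.le⟩
  rwa [smul_smul, div_mul_cancel₀ t hN.ne'] at h

theorem inv_natCast_add_one_smul_mem_convexHull_of_card_support_le (hC : ∀ i j, 0 ≤ C i j)
    (hCd : ∀ i j, C i j ≤ d i) (hd : 0 ≤ d) {x : ι → ℝ} (hx : 0 ≤ x) (hCx : C *ᵥ x ≤ d)
    {N : ℕ} (hN : #{j | x j ≠ 0} ≤ N) :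
    ((N : ℝ) + 1)⁻¹ • x ∈ convexHull ℝ (knapsackIntPoints C d) := by
  classical
  have hdecomp : x = (fun j => (⌊x j⌋ : ℝ)) + ∑ j with x j ≠ 0, Pi.single j (Int.fract (x j)) := by
    rw [sum_filter_of_ne fun j _ h => by contrapose! h; simp [h], univ_sum_single]
    ext j
    simp
  have hhull := convex_convexHull ℝ (knapsackIntPoints C d)
  have h0 := subset_convexHull ℝ _ (zero_mem_knapsackIntPoints (C := C) hd)
  rw [hdecomp]
  refine hhull.inv_natCast_add_one_smul_add_sum_mem h0
    (subset_convexHull ℝ _ (floor_mem_knapsackIntPoints hC hx hCx)) (fun j _ => ?_) hN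
  have hfract : Int.fract (x j) ∈ Set.Icc (0 : ℝ) 1 := ⟨Int.fract_nonneg _, (Int.fract_lt_one _).le⟩
  simpa [← Pi.single_smul'] using hhull.smul_mem_of_zero_mem h0
    (subset_convexHull ℝ _ (single_one_mem_knapsackIntPoints hCd j)) hfract

theorem card_support_lt_card_support {x y : ι → ℝ} (hxy : ∀ j, x j = 0 → y j = 0) {j : ι}
    (hxj : x j ≠ 0) (hyj : y j = 0) : #{j | y j ≠ 0} < #{j | x j ≠ 0} := by
  refine card_lt_card ((ssubset_iff_of_subset fun j' => ?_).mpr ⟨j, by simpa, by simpa⟩)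
  simpa only [mem_filter, mem_univ, true_and] using mt (hxy j')

theorem exists_pos_add_smul_nonneg_card_support_lt {x w : ι → ℝ} (hx : 0 ≤ x)
    (hxw : ∀ j, x j = 0 → w j = 0) {j₀ : ι} (hj₀ : w j₀ < 0) :
    ∃ t : ℝ, 0 < t ∧ 0 ≤ x + t • w ∧ #{j | (x + t • w) j ≠ 0} < #{j | x j ≠ 0} := by
  obtain ⟨j₁, hj₁, hmin⟩ := exists_min_image {j | w j < 0} (fun j => x j / -w j) ⟨j₀, by simpa⟩
  simp only [mem_filter, mem_univ, true_and] at hj₁ hmin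
  have hxj₁ : x j₁ ≠ 0 := fun h => hj₁.ne (hxw j₁ h)
  refine ⟨x j₁ / -w j₁, div_pos ((hx j₁).lt_of_ne' hxj₁) (neg_pos.mpr hj₁), fun j => ?_,
    card_support_lt_card_support (fun j hj => by simp [hj, hxw j hj]) hxj₁ ?_⟩
  · simp only [Pi.zero_apply, Pi.add_apply, Pi.smul_apply, smul_eq_mul]
    rcases lt_or_ge (w j) 0 with hj | hj
    · have := (le_div_iff₀ (neg_pos.mpr hj)).mp (hmin j hj)
      linarith
    · exact add_nonneg (hx j)
        (mul_nonneg (div_nonneg (hx j₁) (neg_nonneg.mpr hj₁.le)) hj)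
  · have := hj₁.ne
    simp only [Pi.add_apply, Pi.smul_apply, smul_eq_mul]
    field_simp
    ring

theorem exists_neg_of_mulVec_eq_zero (hC : ∀ i j, 0 ≤ C i j) {w : ι → ℝ}
    (hCw : C *ᵥ w = 0) {j : ι} (hwj : w j ≠ 0) {i : κ} (hCij : C i j ≠ 0) : ∃ j, w j < 0 := by
  by_contra! hw
  have hterms := (sum_eq_zero_iff_of_nonneg fun j _ => mul_nonneg (hC i j) (hw j)).mp
    (congrFun hCw i) j (mem_univ j)
  exact (mul_ne_zero hCij hwj) hterms

variable (C) in
theorem exists_ne_zero_mulVec_eq_zero_of_card_lt [Fintype κ] {s : Finset ι}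
    (hs : Fintype.card κ < #s) : ∃ w ≠ 0, C *ᵥ w = 0 ∧ ∀ j ∉ s, w j = 0 := by
  classical
  let f := C.mulVecLin.prod (LinearMap.funLeft ℝ ℝ (Subtype.val : {j // j ∉ s} → ι))
  have hf : LinearMap.ker f ≠ ⊥ := by
    refine LinearMap.ker_ne_bot_of_finrank_lt ?_
    rw [Module.finrank_prod, Module.finrank_fintype_fun_eq_card,
      Module.finrank_fintype_fun_eq_card, Fintype.card_subtype_compl, Fintype.card_coe,
      Module.finrank_fintype_fun_eq_card]
    have := card_le_univ s
    omega
  obtain ⟨w, hw, hw0⟩ := (Submodule.ne_bot_iff _).mp hf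
  exact ⟨w, hw0, congrArg Prod.fst hw, fun j hj => congrFun (congrArg Prod.snd hw) ⟨j, hj⟩⟩

theorem smul_mem_convexHull_knapsackIntPoints_of_col_eq_zero (hC : ∀ i j, 0 ≤ C i j)
    {a : ℝ} (ha : 0 ≤ a) {x : ι → ℝ} (hx : 0 ≤ x) (hCx : C *ᵥ x ≤ d) {j : ι} (hxj : x j ≠ 0)
    (hCj : ∀ i, C i j = 0)
    (ih : ∀ y : ι → ℝ, #{j | y j ≠ 0} < #{j | x j ≠ 0} → 0 ≤ y → C *ᵥ y ≤ d →
      a • y ∈ convexHull ℝ (knapsackIntPoints C d)) :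
    a • x ∈ convexHull ℝ (knapsackIntPoints C d) := by
  classical
  have hy := ih (Function.update x j 0)
    (card_support_lt_card_support (fun j' h => by simp [Function.update_apply, h]) hxj (by simp))
    (le_update_iff.mpr ⟨le_rfl, fun j' _ => hx j'⟩)
    ((mulVec_le_mulVec_of_nonneg hC (update_le_iff.mpr ⟨hx j, fun _ _ => le_rfl⟩)).trans hCx)
  have hsplit : a • x = a • Function.update x j 0 + (a * x j) • Pi.single j 1 := by
    ext j'
    rcases eq_or_ne j' j with rfl | h <;> simp [*]
  rw [hsplit]
  exact add_smul_single_one_mem_convexHull_knapsackIntPoints hCj hy (mul_nonneg ha (hx j))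

theorem Convex.smul_mem_of_card_lt_card_support [Fintype κ] {H : Set (ι → ℝ)} (hH : Convex ℝ H)
    (hC : ∀ i j, 0 ≤ C i j) {a : ℝ} {x : ι → ℝ} (hx : 0 ≤ x) (hCx : C *ᵥ x ≤ d)
    (hcard : Fintype.card κ < #{j | x j ≠ 0}) (hcol : ∀ j, x j ≠ 0 → ∃ i, C i j ≠ 0)
    (ih : ∀ y : ι → ℝ, #{j | y j ≠ 0} < #{j | x j ≠ 0} → 0 ≤ y → C *ᵥ y ≤ d → a • y ∈ H) :
    a • x ∈ H := by
  obtain ⟨w, hw0, hCw, hws⟩ := exists_ne_zero_mulVec_eq_zero_of_card_lt C hcard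
  have hxw : ∀ j, x j = 0 → w j = 0 := fun j h => hws j (by simpa using h)
  obtain ⟨j, hwj⟩ := Function.ne_iff.mp hw0
  obtain ⟨i, hCij⟩ := hcol j fun h => hwj (hxw j h)
  have hCw' : C *ᵥ -w = 0 := by rw [mulVec_neg, hCw, neg_zero]
  obtain ⟨j₁, hj₁⟩ := exists_neg_of_mulVec_eq_zero hC hCw hwj hCij
  obtain ⟨j₂, hj₂⟩ := exists_neg_of_mulVec_eq_zero hC hCw' (neg_ne_zero.mpr hwj) hCij
  obtain ⟨t₁, ht₁, hx₁, hcard₁⟩ := exists_pos_add_smul_nonneg_card_support_lt hx hxw hj₁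
  obtain ⟨t₂, ht₂, hx₂, hcard₂⟩ :=
    exists_pos_add_smul_nonneg_card_support_lt hx (fun j h => by simp [hxw j h]) hj₂
  have hC_add {v : ι → ℝ} (hv : C *ᵥ v = 0) (t : ℝ) : C *ᵥ (x + t • v) ≤ d := by
    rwa [mulVec_add, mulVec_smul, hv, smul_zero, add_zero]
  have hcomb : a • x =
      (t₂ / (t₁ + t₂)) • a • (x + t₁ • w) + (t₁ / (t₁ + t₂)) • a • (x + t₂ • -w) := by
    ext j
    simp only [Pi.add_apply, Pi.smul_apply, Pi.neg_apply, smul_eq_mul]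
    field_simp
    ring
  rw [hcomb]
  exact hH (ih _ hcard₁ hx₁ (hC_add hCw t₁)) (ih _ hcard₂ hx₂ (hC_add hCw' t₂)) (by positivity)
    (by positivity) (by field_simp; ring)

theorem inv_card_add_one_smul_mem_convexHull_knapsackIntPoints [Fintype κ] (hC : ∀ i j, 0 ≤ C i j)
    (hCd : ∀ i j, C i j ≤ d i) (hd : 0 ≤ d) {x : ι → ℝ} (hx : 0 ≤ x) (hCx : C *ᵥ x ≤ d) :
    ((Fintype.card κ : ℝ) + 1)⁻¹ • x ∈ convexHull ℝ (knapsackIntPoints C d) := by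
  induction hk : #{j | x j ≠ 0} using Nat.strong_induction_on generalizing x with
  | _ k ih =>
  subst hk
  replace ih (y : ι → ℝ) (hy : #{j | y j ≠ 0} < #{j | x j ≠ 0}) (hy0 : 0 ≤ y)
      (hCy : C *ᵥ y ≤ d) := ih _ hy hy0 hCy rfl
  by_cases hsmall : #{j | x j ≠ 0} ≤ Fintype.card κ
  · exact inv_natCast_add_one_smul_mem_convexHull_of_card_support_le hC hCd hd hx hCx hsmall
  by_cases hzero_col : ∃ j, x j ≠ 0 ∧ ∀ i, C i j = 0
  · obtain ⟨j, hxj, hCj⟩ := hzero_col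
    exact smul_mem_convexHull_knapsackIntPoints_of_col_eq_zero hC (by positivity) hx hCx hxj hCj ih
  · push Not at hzero_col
    exact (convex_convexHull ℝ _).smul_mem_of_card_lt_card_support hC hx hCx (not_le.mp hsmall)
      hzero_col ih

end Knapsack

section Packing

variable {m n : ℕ} {A : Matrix (Fin m) (Fin n) ℚ} {b : Fin m → ℚ}

theorem packAggIntHull2_eq_convexHull_knapsackIntPoints (l1 l2 : Fin m → ℝ) :
    packAggIntHull2 A b l1 l2 = convexHull ℝ (knapsackIntPoints
      (Matrix.of fun r => ![l1, l2] r ᵥ* A.map Rat.cast)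
      (fun r => ![l1, l2] r ⬝ᵥ fun i => (b i : ℝ))) := by
  rw [packAggIntHull2, knapsackIntPoints]
  congr 1
  ext z
  simp only [Set.mem_ofPred_eq, Pi.le_def, Fin.forall_fin_two, mulVec, of_apply, cons_val_zero,
    cons_val_one, ← dotProduct_mulVec]
  rfl

theorem nonneg_and_mulVec_apply_le_of_mem_packAggIntHull2_single {x : Fin n → ℝ} {i i' : Fin m}
    (hx : x ∈ packAggIntHull2 A b (Pi.single i 1) (Pi.single i' 1)) :
    0 ≤ x ∧ (A.map Rat.cast *ᵥ x) i ≤ b i := by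
  rw [packAggIntHull2_eq_convexHull_knapsackIntPoints] at hx
  obtain ⟨hx0, hAx⟩ := convexHull_knapsackIntPoints_subset hx
  exact ⟨hx0, by simpa [mulVec, ← dotProduct_mulVec] using hAx 0⟩

theorem nonneg_and_mulVec_le_of_mem_packRow2Closure (hm : 2 ≤ m) {x : Fin n → ℝ}
    (hx : x ∈ packRow2Closure A b) : 0 ≤ x ∧ A.map Rat.cast *ᵥ x ≤ fun i => (b i : ℝ) := by
  simp only [packRow2Closure, Set.mem_iInter] at hx
  have : Nontrivial (Fin m) := Fin.nontrivial_iff_two_le.mpr hm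
  obtain ⟨i₀, i₁, hi₀₁⟩ := exists_pair_ne (Fin m)
  refine ⟨(nonneg_and_mulVec_apply_le_of_mem_packAggIntHull2_single (hx i₀ i₁ hi₀₁)).1, fun i => ?_⟩
  obtain ⟨i', hi'⟩ := exists_ne i
  exact (nonneg_and_mulVec_apply_le_of_mem_packAggIntHull2_single (hx i i' hi'.symm)).2

theorem inv_three_smul_mem_packAggIntHull2 (hA : ∀ i j, 0 ≤ A i j) (hb : ∀ i, 0 ≤ b i)
    (hAb : ∀ i j, A i j ≤ b i) {l1 l2 : Fin m → ℝ} (hl1 : ∀ i, 0 ≤ l1 i) (hl2 : ∀ i, 0 ≤ l2 i)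
    {x : Fin n → ℝ} (hx : 0 ≤ x) (hAx : A.map Rat.cast *ᵥ x ≤ fun i => (b i : ℝ)) :
    (3 : ℝ)⁻¹ • x ∈ packAggIntHull2 A b l1 l2 := by
  have hL : ∀ r, 0 ≤ ![l1, l2] r := Fin.forall_fin_two.mpr ⟨hl1, hl2⟩
  have hA' : ∀ i j, (0 : ℝ) ≤ A i j := fun i j => Rat.cast_nonneg.mpr (hA i j)
  have hb' : ∀ i, (0 : ℝ) ≤ b i := fun i => Rat.cast_nonneg.mpr (hb i)
  have hAb' : ∀ i j, (A i j : ℝ) ≤ b i := fun i j => Rat.cast_le.mpr (hAb i j)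
  have h := inv_card_add_one_smul_mem_convexHull_knapsackIntPoints
    (C := Matrix.of fun r => ![l1, l2] r ᵥ* A.map Rat.cast)
    (d := fun r => ![l1, l2] r ⬝ᵥ fun i => (b i : ℝ))
    (fun r j => dotProduct_nonneg_of_nonneg (hL r) fun i => hA' i j)
    (fun r j => dotProduct_le_dotProduct_of_nonneg_left (fun i => hAb' i j) (hL r))
    (fun r => dotProduct_nonneg_of_nonneg (hL r) hb') hx
    (fun r => (dotProduct_mulVec _ _ _).symm.trans_le
      (dotProduct_le_dotProduct_of_nonneg_left hAx (hL r)))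
  rw [packAggIntHull2_eq_convexHull_knapsackIntPoints]
  convert h using 2
  norm_num

end Packing

theorem packing_row2Closure_subset_three_smul_agg2Closure_general
    {m n : ℕ} (hm : 2 ≤ m)
    (A : Matrix (Fin m) (Fin n) ℚ) (b : Fin m → ℚ)
    (hA : ∀ i j, 0 ≤ A i j) (hb : ∀ i, 0 ≤ b i) (hAb : ∀ i j, A i j ≤ b i) :
    packRow2Closure A b ⊆ (3 : ℝ) • packAgg2Closure A b := by
  intro x hx
  obtain ⟨hx0, hAx⟩ := nonneg_and_mulVec_le_of_mem_packRow2Closure hm hx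
  refine Set.mem_smul_set.mpr ⟨(3 : ℝ)⁻¹ • x, ?_, smul_inv_smul₀ three_ne_zero x⟩
  simp only [packAgg2Closure, Set.mem_iInter]
  exact fun l1 hl1 l2 hl2 => inv_three_smul_mem_packAggIntHull2 hA hb hAb hl1 hl2 hx0 hAx

/-- For a packing polyhedron `P = {x ≥ 0 : Ax ≤ b}` with rational data
and `m ≥ 2` constraints, `2-𝒜(P) ⊆ 3 · 𝒜₂(P)`. -/
theorem packing_row2Closure_subset_three_smul_agg2Closure
    {m n : ℕ} (hm : 2 ≤ m) (hn : 0 < n)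
    (A : Matrix (Fin m) (Fin n) ℚ) (b : Fin m → ℚ)
    (hA : ∀ i j, 0 ≤ A i j) (hb : ∀ i, 0 ≤ b i) (hAb : ∀ i j, A i j ≤ b i) :
    packRow2Closure A b ⊆ (3 : ℝ) • packAgg2Closure A b :=
  packing_row2Closure_subset_three_smul_agg2Closure_general hm A b hA hb hAb
end

section
/- Let P be a (J⁺,J⁻) sign-pattern polyhedron in ℝⁿ defined by a single non-trivial constraint with rational data, i.e., P = {x ∈ ℝⁿ_+ : Σ_{j∈J⁺} a_j x_j − Σ_{j∈J⁻} a_j x_j ≤ b} with rational a_j ≥ 0, b ≥ 0, and a_j ≤ b for j ∈ J⁺. Then P ⊆ 2·P^I, where P^I := conv(P ∩ ℤⁿ). -/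
/-!
Write the constraint as `w ⬝ᵥ x ≤ b` with `w_j = ±a_j`, and halve a point of `P`. Its coordinates
of positive weight, rescaled by a suitable `θ ∈ [0, 1]`, form a vector `u ≥ 0` with
`w ⬝ᵥ u ≤ b / 2`, while the rest `v ≥ 0` has `w ⬝ᵥ v ≤ 0`. On each axis of positive weight
`w_j ≤ b`, the integer point `⌊b / w_j⌋₊ e_j` lies in `P` and at least half as far out as the point
where the axis leaves `P`, so `u` is a convex combination of these points and `0`. The vector `v`
is a nonnegative combination of the axes of nonpositive weight and of the exchange directions
`-w_k e_i + w_i e_k` (`w_i > 0 > w_k`). These are rational recession directions of `P`; an integer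
multiple of each translates `P ∩ ℤⁿ` into itself, so each of them translates `P^I` into itself.
-/

open scoped Pointwise

/-- The sign-pattern polyhedron defined by a single non-trivial rational constraint
`Σ_{j∈J⁺} a_j x_j − Σ_{j∈J⁻} a_j x_j ≤ b` together with `x ≥ 0`. -/
def oneRowPolyQ {n : ℕ} (Jp Jn : Finset (Fin n)) (a : Fin n → ℚ) (b : ℚ) :
    Set (Fin n → ℝ) :=
  {x | (∀ j, 0 ≤ x j) ∧ ∑ j ∈ Jp, (a j : ℝ) * x j - ∑ j ∈ Jn, (a j : ℝ) * x j ≤ (b : ℝ)}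

open Finset

section Recession

variable {E : Type*} [AddCommGroup E] [Module ℝ E] {K : Set E}

lemma Convex.add_smul_mem_of_forall_nat (hK : Convex ℝ K) {x d : E}
    (h : ∀ m : ℕ, x + (m : ℝ) • d ∈ K) {ρ : ℝ} (hρ : 0 ≤ ρ) : x + ρ • d ∈ K := by
  have hfrac : ρ - ⌊ρ⌋₊ ∈ Set.Icc (0 : ℝ) 1 :=
    ⟨sub_nonneg.2 (Nat.floor_le hρ), by linarith [Nat.lt_floor_add_one ρ]⟩
  have hnext : x + (⌊ρ⌋₊ : ℝ) • d + d ∈ K := by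
    simpa [add_smul, add_assoc] using h (⌊ρ⌋₊ + 1)
  simpa [add_assoc, ← add_smul] using hK.add_smul_mem (h ⌊ρ⌋₊) hnext hfrac

def Convex.recessionCone (hK : Convex ℝ K) : PointedCone ℝ E where
  carrier := {v | ∀ x ∈ K, x + v ∈ K}
  add_mem' {u v} hu hv x hx := by simpa only [add_assoc] using hv _ (hu x hx)
  zero_mem' x hx := by simpa only [add_zero] using hx
  smul_mem' c v hv x hx := by
    refine hK.add_smul_mem_of_forall_nat (fun m => ?_) c.2
    induction m with
    | zero => simpa using hx
    | succ m ih => simpa [add_smul, add_assoc] using hv _ ih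

lemma mem_recessionCone_convexHull {S : Set E} {d : E} (h : ∀ s ∈ S, s + d ∈ S) :
    d ∈ (convex_convexHull ℝ S).recessionCone := by
  have hsub : d +ᵥ convexHull ℝ S ⊆ convexHull ℝ S := by
    rw [← convexHull_vadd]
    refine convexHull_min ?_ (convex_convexHull ℝ S)
    rintro _ ⟨s, hs, rfl⟩
    exact subset_convexHull ℝ S (by simpa [add_comm] using h s hs)
  intro x hx
  simpa [add_comm] using hsub ⟨x, hx, rfl⟩

lemma Convex.sum_smul_mem_of_sum_le_one {α : Type*} (hK : Convex ℝ K) (h0 : (0 : E) ∈ K)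
    {t : Finset α} {c : α → ℝ} {z : α → E} (hc0 : ∀ i ∈ t, 0 ≤ c i)
    (hc1 : ∑ i ∈ t, c i ≤ 1) (hz : ∀ i ∈ t, z i ∈ K) : ∑ i ∈ t, c i • z i ∈ K := by
  simpa [sum_insertNone] using hK.sum_mem (t := insertNone t)
    (w := fun o => o.elim (1 - ∑ i ∈ t, c i) c) (z := fun o => o.elim 0 z)
    (forall_mem_insertNone.2 ⟨by simpa using hc1, hc0⟩) (by simp [sum_insertNone])
    (forall_mem_insertNone.2 ⟨h0, hz⟩)

end Recession

lemma half_le_natFloor {r : ℝ} (hr : 1 ≤ r) : r / 2 ≤ ⌊r⌋₊ := by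
  have h1 : (1 : ℝ) ≤ ⌊r⌋₊ := by exact_mod_cast (Nat.one_le_floor_iff r).2 hr
  linarith [Nat.lt_floor_add_one r]

lemma exists_pos_nat_mul_eq_int {ι : Type*} [Fintype ι] {d : ι → ℝ}
    (hd : ∀ j, ∃ q : ℚ, d j = q) : ∃ m : ℕ, 0 < m ∧ ∀ j, ∃ z : ℤ, (m : ℝ) * d j = z := by
  choose q hq using hd
  refine ⟨∏ j, (q j).den, prod_pos fun j _ => (q j).pos, fun j => ?_⟩
  obtain ⟨k, hk⟩ := dvd_prod_of_mem (fun j => (q j).den) (mem_univ j)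
  have hnum := congrArg (Rat.cast : ℚ → ℝ) (Rat.den_mul_eq_num (q j))
  push_cast at hnum
  refine ⟨k * (q j).num, ?_⟩
  rw [hk, hq]
  push_cast
  linear_combination (k : ℝ) * hnum

lemma exists_mem_Icc_mul_mem_Icc {p c β : ℝ} (hβ : 0 ≤ β) (hcp : c ≤ p) (hcβ : c ≤ β) :
    ∃ θ ∈ Set.Icc (0 : ℝ) 1, θ * p ∈ Set.Icc c β := by
  rcases le_or_gt p β with h | h
  · exact ⟨1, ⟨zero_le_one, le_rfl⟩, by simpa using hcp, by simpa using h⟩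
  · have hp : 0 < p := hβ.trans_lt h
    refine ⟨β / p, ⟨by positivity, (div_le_one hp).2 h.le⟩, ?_, ?_⟩ <;>
      simp only [div_mul_cancel₀ _ hp.ne', hcβ, le_rfl]

section Polyhedron

variable {ι : Type*}

def integerPoints (P : Set (ι → ℝ)) : Set (ι → ℝ) :=
  {x ∈ P | ∀ j, ∃ z : ℤ, x j = z}

def integerHull (P : Set (ι → ℝ)) : Set (ι → ℝ) :=
  convexHull ℝ (integerPoints P)

lemma convex_integerHull (P : Set (ι → ℝ)) : Convex ℝ (integerHull P) :=
  convex_convexHull ℝ _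

def exchangeDir {R : Type*} [Ring R] [DecidableEq ι] (w : ι → R) (i k : ι) : ι → R :=
  Pi.single i (-w k) + Pi.single k (w i)

lemma sum_sum_smul_exchangeDir_apply [DecidableEq ι] (w v : ι → ℝ) (s t : Finset ι) (j : ι) :
    (∑ i ∈ s, ∑ k ∈ t, (v i * v k) • exchangeDir w i k) j =
      (if j ∈ s then (∑ k ∈ t, -w k * v k) * v j else 0) +
        (if j ∈ t then (∑ i ∈ s, w i * v i) * v j else 0) := by
  simp only [exchangeDir, Finset.sum_apply, Pi.smul_apply, Pi.add_apply, Pi.single_apply,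
    smul_eq_mul, mul_add, sum_add_distrib, mul_ite, mul_zero]
  rw [sum_comm (s := s)]
  simp [sum_ite_irrel, mul_sum, mul_comm, mul_left_comm]

variable [Fintype ι]

def oneRowPoly (w : ι → ℝ) (b : ℝ) : Set (ι → ℝ) :=
  {x | (∀ j, 0 ≤ x j) ∧ w ⬝ᵥ x ≤ b}

variable {w : ι → ℝ} {b : ℝ}

lemma zero_mem_integerHull (hb : 0 ≤ b) : 0 ∈ integerHull (oneRowPoly w b) :=
  subset_convexHull ℝ _ ⟨⟨fun _ => le_rfl, by simpa using hb⟩, fun _ => ⟨0, by simp⟩⟩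

lemma add_mem_integerPoints {x d : ι → ℝ} (hx : x ∈ integerPoints (oneRowPoly w b))
    (hd0 : ∀ j, 0 ≤ d j) (hdw : w ⬝ᵥ d ≤ 0) (hdZ : ∀ j, ∃ z : ℤ, d j = z) :
    x + d ∈ integerPoints (oneRowPoly w b) := by
  obtain ⟨⟨hx0, hxw⟩, hxZ⟩ := hx
  refine ⟨⟨fun j => add_nonneg (hx0 j) (hd0 j), by rw [dotProduct_add]; linarith⟩, fun j => ?_⟩
  obtain ⟨z, hz⟩ := hxZ j
  obtain ⟨z', hz'⟩ := hdZ j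
  exact ⟨z + z', by simp [hz, hz']⟩

lemma mem_recessionCone_integerHull_of_rat {d : ι → ℝ} (hd0 : ∀ j, 0 ≤ d j)
    (hdw : w ⬝ᵥ d ≤ 0) (hdQ : ∀ j, ∃ q : ℚ, d j = q) :
    d ∈ (convex_integerHull (oneRowPoly w b)).recessionCone := by
  obtain ⟨m, hm, hmZ⟩ := exists_pos_nat_mul_eq_int hdQ
  have hm' : (0 : ℝ) < m := Nat.cast_pos.2 hm
  have hmd : (m : ℝ) • d ∈ (convex_integerHull (oneRowPoly w b)).recessionCone :=
    mem_recessionCone_convexHull fun x hx => add_mem_integerPoints hx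
      (fun j => mul_nonneg hm'.le (hd0 j))
      (by rw [dotProduct_smul]; exact smul_nonpos_of_nonneg_of_nonpos hm'.le hdw) hmZ
  simpa [smul_smul, hm'.ne'] using PointedCone.smul_mem _ (inv_nonneg.2 hm'.le) hmd

variable [DecidableEq ι]

lemma single_natFloor_mem_integerPoints (hb : 0 ≤ b) (j : ι) :
    Pi.single j (⌊b / w j⌋₊ : ℝ) ∈ integerPoints (oneRowPoly w b) := by
  refine ⟨⟨fun i => ?_, ?_⟩, fun i => ⟨(Pi.single j ⌊b / w j⌋₊ : ι → ℤ) i, ?_⟩⟩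
  · by_cases h : i = j <;> simp [h]
  · rw [dotProduct_single]
    rcases le_or_gt (w j) 0 with h | h
    · nlinarith [Nat.cast_nonneg (α := ℝ) ⌊b / w j⌋₊]
    · calc w j * ⌊b / w j⌋₊ ≤ w j * (b / w j) :=
            mul_le_mul_of_nonneg_left (Nat.floor_le (by positivity)) h.le
        _ = b := mul_div_cancel₀ _ h.ne'
  · by_cases h : i = j <;> simp [h]

lemma mem_integerHull_of_eq_zero_of_nonpos (hb : 0 ≤ b) (hwb : ∀ j, w j ≤ b) {u : ι → ℝ}
    (hu0 : ∀ j, 0 ≤ u j) (hu : ∀ j, w j ≤ 0 → u j = 0) (huw : w ⬝ᵥ u ≤ b / 2) :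
    u ∈ integerHull (oneRowPoly w b) := by
  set c : ι → ℕ := fun j => ⌊b / w j⌋₊
  have hc : ∀ j, 0 < w j → b / w j / 2 ≤ c j := fun j hj =>
    half_le_natFloor ((one_le_div hj).2 (hwb j))
  have hcpos : ∀ j, 0 < w j → (0 : ℝ) < c j := fun j hj =>
    lt_of_lt_of_le (by have := hj.trans_le (hwb j); positivity) (hc j hj)
  have hdecomp : ∑ j, (u j / c j) • Pi.single j (c j : ℝ) = u := by
    conv_rhs => rw [← univ_sum_single u]
    refine sum_congr rfl fun j _ => ?_
    rw [← Pi.single_smul', smul_eq_mul]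
    rcases le_or_gt (w j) 0 with h | h
    · simp [hu j h]
    · rw [div_mul_cancel₀ _ (hcpos j h).ne']
  have hweights : ∑ j, u j / c j ≤ 1 := by
    calc ∑ j, u j / c j ≤ ∑ j, 2 / b * (w j * u j) := sum_le_sum fun j _ => ?_
      _ = 2 / b * (w ⬝ᵥ u) := by rw [dotProduct, mul_sum]
      _ ≤ 2 / b * (b / 2) := by gcongr
      _ ≤ 1 := by
        rcases hb.eq_or_lt with h | h
        · simp [← h]
        · rw [div_mul_div_comm, mul_comm, div_self (by positivity)]
    rcases le_or_gt (w j) 0 with h | h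
    · simp [hu j h]
    · have hb' : 0 < b := h.trans_le (hwb j)
      calc u j / c j ≤ u j / (b / w j / 2) :=
            div_le_div_of_nonneg_left (hu0 j) (by positivity) (hc j h)
        _ = 2 / b * (w j * u j) := by field_simp
  rw [← hdecomp]
  exact (convex_integerHull _).sum_smul_mem_of_sum_le_one (zero_mem_integerHull hb)
    (fun j _ => div_nonneg (hu0 j) (Nat.cast_nonneg _)) hweights
    fun j _ => subset_convexHull ℝ _ (single_natFloor_mem_integerPoints hb j)

lemma dotProduct_exchangeDir {R : Type*} [CommRing R] (w : ι → R) (i k : ι) :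
    w ⬝ᵥ exchangeDir w i k = 0 := by
  simp only [exchangeDir, dotProduct_add, dotProduct_single]
  ring

lemma exchangeDir_mem_recessionCone_integerHull (hw : ∀ j, ∃ q : ℚ, w j = q) {i k : ι}
    (hi : 0 < w i) (hk : w k < 0) :
    exchangeDir w i k ∈ (convex_integerHull (oneRowPoly w b)).recessionCone := by
  choose wq hwq using hw
  refine mem_recessionCone_integerHull_of_rat (fun j => ?_) (dotProduct_exchangeDir w i k).le
    fun j => ⟨exchangeDir wq i k j, ?_⟩ <;> simp only [exchangeDir, Pi.add_apply, Pi.single_apply]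
  · split_ifs <;> linarith
  · split_ifs <;> simp [hwq]

lemma mem_recessionCone_integerHull_of_eq_zero_of_pos {z : ι → ℝ} (hz0 : ∀ j, 0 ≤ z j)
    (hz : ∀ j, 0 < w j → z j = 0) :
    z ∈ (convex_integerHull (oneRowPoly w b)).recessionCone := by
  rw [← univ_sum_single z]
  refine Submodule.sum_mem _ fun j _ => ?_
  by_cases hwj : 0 < w j
  · simp [hz j hwj]
  · have hsingle := mem_recessionCone_integerHull_of_rat (w := w) (b := b) (d := Pi.single j 1)
      (fun i => by by_cases h : i = j <;> simp [h]) (by simpa using not_lt.1 hwj)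
      (fun i => ⟨(Pi.single j 1 : ι → ℚ) i, by by_cases h : i = j <;> simp [h]⟩)
    simpa [← Pi.single_smul'] using PointedCone.smul_mem _ (hz0 j) hsingle

lemma mem_recessionCone_integerHull (hw : ∀ j, ∃ q : ℚ, w j = q) {v : ι → ℝ}
    (hv0 : ∀ j, 0 ≤ v j) (hvw : w ⬝ᵥ v ≤ 0) :
    v ∈ (convex_integerHull (oneRowPoly w b)).recessionCone := by
  set C := (convex_integerHull (oneRowPoly w b)).recessionCone
  set pos : Finset ι := {j | 0 < w j}
  set neg : Finset ι := {j | w j < 0}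
  set p := ∑ i ∈ pos, w i * v i
  set q := ∑ k ∈ neg, -w k * v k
  have hdot : p - q = w ⬝ᵥ v := by
    simp only [p, q, pos, neg, sum_filter, dotProduct, ← sum_sub_distrib]
    refine sum_congr rfl fun j _ => ?_
    rcases lt_trichotomy (w j) 0 with h | h | h <;> simp [h, not_lt.2 h.le]
  have hp : 0 ≤ p := sum_nonneg fun i hi => mul_nonneg (mem_filter.1 hi).2.le (hv0 i)
  rcases (sum_nonneg fun k hk => mul_nonneg (neg_nonneg.2 (mem_filter.1 hk).2.le) (hv0 k) :
    0 ≤ q).eq_or_lt with hq | hq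
  · refine mem_recessionCone_integerHull_of_eq_zero_of_pos hv0 fun j hj => ?_
    have hp0 : p = 0 := by linarith
    have := (sum_eq_zero_iff_of_nonneg fun i hi => mul_nonneg (mem_filter.1 hi).2.le
      (hv0 i)).1 hp0 j (mem_filter.2 ⟨mem_univ j, hj⟩)
    simpa [hj.ne'] using this
  · have hpairs : ∑ i ∈ pos, ∑ k ∈ neg, (v i * v k) • exchangeDir w i k ∈ C :=
      Submodule.sum_mem _ fun i hi => Submodule.sum_mem _ fun k hk =>
        PointedCone.smul_mem _ (mul_nonneg (hv0 i) (hv0 k))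
          (exchangeDir_mem_recessionCone_integerHull hw (mem_filter.1 hi).2 (mem_filter.1 hk).2)
    -- Coordinatewise, the sum of exchange moves is `q • v` on `pos` and `p • v ≤ q • v` on `neg`.
    have hrest : q • v - ∑ i ∈ pos, ∑ k ∈ neg, (v i * v k) • exchangeDir w i k ∈ C := by
      have hpq : p ≤ q := by linarith
      refine mem_recessionCone_integerHull_of_eq_zero_of_pos (fun j => ?_) fun j hj => ?_ <;>
        simp only [Pi.sub_apply, Pi.smul_apply, smul_eq_mul, sum_sum_smul_exchangeDir_apply, pos,
          neg, mem_filter, mem_univ, true_and]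
      · have := mul_nonneg (sub_nonneg.2 hpq) (hv0 j)
        split_ifs <;> nlinarith [hv0 j]
      · rw [if_pos hj, if_neg (not_lt.2 hj.le)]
        ring
    have hqv : q • v ∈ C := by simpa using add_mem hpairs hrest
    have hv := PointedCone.smul_mem C (inv_nonneg.2 hq.le) hqv
    rwa [smul_smul, inv_mul_cancel₀ hq.ne', one_smul] at hv

theorem oneRowPoly_subset_two_smul_integerHull (hw : ∀ j, ∃ q : ℚ, w j = q) (hb : 0 ≤ b)
    (hwb : ∀ j, w j ≤ b) : oneRowPoly w b ⊆ (2 : ℝ) • integerHull (oneRowPoly w b) := by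
  rintro x ⟨hx0, hxw⟩
  set y : ι → ℝ := (2⁻¹ : ℝ) • x
  set yPos : ι → ℝ := fun j => if 0 < w j then y j else 0
  have hy0 : ∀ j, 0 ≤ y j := fun j => mul_nonneg (by norm_num) (hx0 j)
  have hyw : w ⬝ᵥ y ≤ b / 2 := by
    rw [dotProduct_smul, smul_eq_mul]
    linarith
  have hyPos : w ⬝ᵥ y ≤ w ⬝ᵥ yPos := sum_le_sum fun j _ => by
    by_cases h : 0 < w j
    · simp [yPos, h]
    · simpa [yPos, h] using mul_nonpos_of_nonpos_of_nonneg (not_lt.1 h) (hy0 j)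
  obtain ⟨θ, ⟨hθ0, hθ1⟩, hlow, hup⟩ :=
    exists_mem_Icc_mul_mem_Icc (div_nonneg hb two_pos.le) hyPos hyw
  have hu : θ • yPos ∈ integerHull (oneRowPoly w b) := by
    refine mem_integerHull_of_eq_zero_of_nonpos hb hwb (fun j => ?_) (fun j hj => ?_) ?_
    · exact mul_nonneg hθ0 (by by_cases h : 0 < w j <;> simp [yPos, h, hy0 j])
    · simp [yPos, not_lt.2 hj]
    · rwa [dotProduct_smul, smul_eq_mul]
  have hv : y - θ • yPos ∈ (convex_integerHull (oneRowPoly w b)).recessionCone := by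
    refine mem_recessionCone_integerHull hw (fun j => ?_) ?_
    · simp only [Pi.sub_apply, Pi.smul_apply, smul_eq_mul, yPos]
      split_ifs <;> nlinarith [hy0 j]
    · rw [dotProduct_sub, dotProduct_smul θ, smul_eq_mul]
      linarith
  refine ⟨y, by simpa using hv _ hu, ?_⟩
  simp [y, smul_smul]

end Polyhedron

theorem oneRow_subset_two_smul_integerHull_general {n : ℕ}
    (Jp Jn : Finset (Fin n))
    (a : Fin n → ℚ) (ha : ∀ j, 0 ≤ a j) (b : ℚ) (hb : 0 ≤ b) (hab : ∀ j ∈ Jp, a j ≤ b) :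
    oneRowPolyQ Jp Jn a b ⊆
      (2 : ℝ) • convexHull ℝ {x ∈ oneRowPolyQ Jp Jn a b | ∀ j, ∃ z : ℤ, x j = (z : ℝ)} := by
  set w : Fin n → ℚ := fun j => (if j ∈ Jp then a j else 0) - (if j ∈ Jn then a j else 0)
  have hP : oneRowPolyQ Jp Jn a b = oneRowPoly (fun j => (w j : ℝ)) b := by
    ext x
    simp [oneRowPolyQ, oneRowPoly, dotProduct, w, sub_mul, sum_sub_distrib,
      apply_ite (Rat.cast : ℚ → ℝ), ite_mul, sum_ite_mem]
  have hwb : ∀ j, w j ≤ b := fun j => by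
    dsimp only [w]
    by_cases hj : j ∈ Jp
    · have := hab j hj
      split_ifs <;> linarith [ha j]
    · split_ifs <;> linarith [ha j]
  rw [hP]
  exact oneRowPoly_subset_two_smul_integerHull (fun j => ⟨w j, rfl⟩) (by exact_mod_cast hb)
    fun j => by exact_mod_cast hwb j

/-- A `(J⁺,J⁻)` sign-pattern polyhedron `P` defined by a single non-trivial
constraint with rational data (`a_j ≥ 0`, `b ≥ 0`, `a_j ≤ b` on `J⁺`) satisfies `P ⊆ 2 · P^I`,
where `P^I = conv(P ∩ ℤⁿ)`. -/
theorem oneRow_subset_two_smul_integerHull {n : ℕ} (hn : 0 < n)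
    (Jp Jn : Finset (Fin n)) (hdisj : Disjoint Jp Jn) (hunion : Jp ∪ Jn = Finset.univ)
    (a : Fin n → ℚ) (ha : ∀ j, 0 ≤ a j) (b : ℚ) (hb : 0 ≤ b) (hab : ∀ j ∈ Jp, a j ≤ b) :
    oneRowPolyQ Jp Jn a b ⊆
      (2 : ℝ) • convexHull ℝ {x ∈ oneRowPolyQ Jp Jn a b | ∀ j, ∃ z : ℤ, x j = (z : ℝ)} :=
  oneRow_subset_two_smul_integerHull_general Jp Jn a ha b hb hab
end
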